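/- arXiv:1705.04091 — 6 statements merged into one kernel-verified Lean document; each statement's English description precedes it below -/
import Mathlib

section
/- Let τ be an algebraic integer all of whose Galois conjugates (including τ itself) have complex absolute value 1. Then τ is a root of unity. -/
/-!
`τ` generates the number field `K = ℚ⟮τ⟯`, and every complex embedding of `K` sends
`τ` to a root of its minimal polynomial, i.e. to a conjugate. So all archimedean absolute values
of the algebraic integer `τ ∈ K` are `1`, and hence so are those of all its powers. The powers of
`τ` therefore lie in a bounded part of the lattice `𝓞 K ⊂ ℝ^[K:ℚ]`, which is finite, so two powers
coincide.
-/

open Polynomial NumberField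

theorem NumberField.exists_pow_eq_one_of_norm_root_minpoly_eq_one {K : Type*} [Field K]
    [NumberField K] {x : K} (hx : IsIntegral ℤ x)
    (hroots : ∀ z : ℂ, aeval z (minpoly ℤ x) = 0 → ‖z‖ = 1) :
    ∃ n : ℕ, 0 < n ∧ x ^ n = 1 := by
  obtain ⟨n, hn, hxn⟩ := Embeddings.pow_eq_one_of_norm_eq_one K ℂ hx fun φ ↦
    hroots (φ x) (minpoly.aeval_algHom ℤ φ.toIntAlgHom x)
  exact ⟨n, hn, hxn⟩

/-- Kronecker's theorem: an algebraic integer all of whose Galois conjugates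
(the complex roots of its minimal polynomial) have absolute value 1 is a root of unity. -/
theorem kronecker_root_of_unity (τ : ℂ) (hint : IsIntegral ℤ τ)
    (hconj : ∀ z : ℂ, Polynomial.aeval z (minpoly ℤ τ) = 0 → ‖z‖ = 1) :
    ∃ n : ℕ, 0 < n ∧ τ ^ n = 1 := by
  let K := IntermediateField.adjoin ℚ ({τ} : Set ℂ)
  have : FiniteDimensional ℚ K := IntermediateField.adjoin.finiteDimensional hint.tower_top
  have : NumberField K := ⟨⟩
  let x : K := IntermediateField.AdjoinSimple.gen ℚ τ
  have hinj : Function.Injective (algebraMap K ℂ) := (algebraMap K ℂ).injective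
  have hx : IsIntegral ℤ x := (isIntegral_algebraMap_iff hinj).mp hint
  have hminpoly : minpoly ℤ x = minpoly ℤ τ := (minpoly.algebraMap_eq hinj x).symm
  obtain ⟨n, hn, hxn⟩ :=
    exists_pow_eq_one_of_norm_root_minpoly_eq_one hx (hminpoly ▸ hconj)
  exact ⟨n, hn, by simpa [x] using congrArg ((↑) : K → ℂ) hxn⟩
end

section
/- Let G be a group with finite generating set S, let v(n) = |B(n)| be the cardinality of the ball of radius n in the word metric, and let F ⊆ G be a finite nonempty subset. If n is such that v(n) ≥ 2|F|, then there exists s ∈ S with |F △ F·s| ≥ |F|/n. -/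
/-!
The function `g ↦ |F △ F·g|` is subadditive and invariant under `g ↦ g⁻¹`, so on `B(n)` it is at
most `n` times its maximum over `S`. On the other hand `∑_{g ∈ B(n)} |F ∩ F·g| ≤ |F|²`, because
each pair `(a, b) ∈ F × F` is counted only for `g = b⁻¹a`. Hence if `|B(n)| ≥ 2|F|`, some
`g ∈ B(n)` has `|F ∩ F·g| ≤ |F|/2`, that is `|F △ F·g| ≥ |F|`.
-/

open Finset
open scoped symmDiff

/-- The ball of radius `n` in a group `G` with respect to a generating set `S`:
elements expressible as products of at most `n` elements of `S ∪ S⁻¹`. -/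
def wordBall {G : Type*} [Group G] (S : Finset G) (n : ℕ) : Set G :=
  {g | ∃ l : List G, l.length ≤ n ∧ (∀ x ∈ l, x ∈ S ∨ x⁻¹ ∈ S) ∧ l.prod = g}

namespace Finset

theorem card_symmDiff_add_two_mul_card_inter {α : Type*} [DecidableEq α] (s t : Finset α) :
    #(s ∆ t) + 2 * #(s ∩ t) = #s + #t := by
  rw [symmDiff_eq_sup_sdiff_inf, sup_eq_union, inf_eq_inter, ← card_union_add_card_inter, two_mul,
    ← add_assoc, card_sdiff_add_card_eq_card inter_subset_union]

variable {G : Type*} [Group G] [DecidableEq G]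

def boundaryCard (F : Finset G) (g : G) : ℕ := #(F ∆ F.image (· * g))

variable (F : Finset G)

theorem card_image_mul_right_symmDiff (A : Finset G) (g : G) :
    #(F.image (· * g) ∆ A.image (· * g)) = #(F ∆ A) := by
  rw [← image_symmDiff F A (mul_left_injective g), card_image_of_injective _ (mul_left_injective g)]

theorem boundaryCard_inv (g : G) : F.boundaryCard g⁻¹ = F.boundaryCard g := by
  rw [boundaryCard, ← card_image_mul_right_symmDiff F _ g, image_image]
  simp [Function.comp_def, boundaryCard, symmDiff_comm]

theorem boundaryCard_mul_le (x y : G) :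
    F.boundaryCard (x * y) ≤ F.boundaryCard x + F.boundaryCard y := by
  have hxy : F.image (· * (x * y)) = (F.image (· * x)).image (· * y) := by
    simp only [image_image, Function.comp_def, mul_assoc]
  calc F.boundaryCard (x * y)
      ≤ #(F.image (· * y) ∆ (F.image (· * x)).image (· * y) ∪ F ∆ F.image (· * y)) := by
        rw [boundaryCard, hxy, union_comm]
        exact card_le_card (symmDiff_triangle _ _ _)
    _ ≤ F.boundaryCard x + F.boundaryCard y := by
        grw [card_union_le, card_image_mul_right_symmDiff]; rfl

theorem boundaryCard_list_prod_le (l : List G) :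
    F.boundaryCard l.prod ≤ (l.map F.boundaryCard).sum := by
  induction l with
  | nil => simp [boundaryCard]
  | cons x l ih =>
    grw [List.prod_cons, boundaryCard_mul_le, ih]
    simp

theorem boundaryCard_le_of_mem_wordBall {S : Finset G} {n : ℕ} {g : G} (hg : g ∈ wordBall S n) :
    F.boundaryCard g ≤ n * S.sup F.boundaryCard := by
  obtain ⟨l, hlen, hl, rfl⟩ := hg
  have hS : ∀ x ∈ l, F.boundaryCard x ≤ S.sup F.boundaryCard := by
    intro x hx
    rcases hl x hx with hx | hx
    · exact le_sup hx
    · exact F.boundaryCard_inv x ▸ le_sup hx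
  calc F.boundaryCard l.prod ≤ (l.map F.boundaryCard).sum := F.boundaryCard_list_prod_le l
    _ ≤ l.length * S.sup F.boundaryCard := by
        simpa using List.sum_le_card_nsmul _ _ (List.forall_mem_map.2 hS)
    _ ≤ n * S.sup F.boundaryCard := by gcongr

theorem card_inter_image_mul_right (g : G) :
    #(F ∩ F.image (· * g)) = #{p ∈ F ×ˢ F | p.2⁻¹ * p.1 = g} :=
  card_nbij' (fun a ↦ (a, a * g⁻¹)) Prod.fst
    (fun a ↦ by simp +contextual)
    (by
      rintro ⟨a, b⟩ hp
      obtain ⟨hab, rfl⟩ := mem_filter.1 (mem_coe.1 hp)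
      obtain ⟨ha, hb⟩ := mem_product.1 hab
      simp [ha, hb])
    (fun a ↦ by simp)
    (by
      rintro ⟨a, b⟩ hp
      obtain ⟨-, rfl⟩ := mem_filter.1 (mem_coe.1 hp)
      simp)

theorem sum_card_inter_image_mul_right_le (B : Finset G) :
    ∑ g ∈ B, #(F ∩ F.image (· * g)) ≤ #F * #F := by
  simp_rw [card_inter_image_mul_right, sum_card_fiberwise_eq_card_filter, ← card_product]
  exact card_filter_le _ _

theorem exists_mem_card_le_boundaryCard {A : Set G} (hF : F.Nonempty)
    (hA : 2 * #F ≤ Nat.card A) : ∃ g ∈ A, #F ≤ F.boundaryCard g := by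
  have hFpos := hF.card_pos
  have hAfin : A.Finite := Nat.finite_of_card_ne_zero (by omega)
  rw [Nat.card_eq_card_finite_toFinset hAfin] at hA
  obtain ⟨g, hg, hmin⟩ := hAfin.toFinset.exists_min_image (fun g ↦ #(F ∩ F.image (· * g)))
    (by rw [← card_pos]; omega)
  refine ⟨g, hAfin.mem_toFinset.1 hg, ?_⟩
  have hsum := (card_nsmul_le_sum _ _ _ hmin).trans (F.sum_card_inter_image_mul_right_le _)
  rw [smul_eq_mul] at hsum
  have hinter : 2 * #(F ∩ F.image (· * g)) ≤ #F := by
    refine Nat.le_of_mul_le_mul_left ?_ hFpos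
    calc #F * (2 * #(F ∩ F.image (· * g))) = 2 * #F * #(F ∩ F.image (· * g)) := by ring
      _ ≤ #hAfin.toFinset * #(F ∩ F.image (· * g)) := by gcongr
      _ ≤ #F * #F := hsum
  have := card_symmDiff_add_two_mul_card_inter F (F.image (· * g))
  rw [card_image_of_injective _ (mul_left_injective g)] at this
  unfold boundaryCard
  omega

end Finset

theorem coulhon_saloff_coste_general {G : Type*} [Group G] [DecidableEq G]
    (S : Finset G)
    (F : Finset G) (hF : F.Nonempty) (n : ℕ)
    (hv : 2 * F.card ≤ Nat.card (wordBall S n)) :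
    ∃ s ∈ S, (F.card : ℝ) / n ≤ ((symmDiff F (F.image fun f => f * s)).card : ℝ) := by
  obtain ⟨g, hg, hFg⟩ := F.exists_mem_card_le_boundaryCard hF hv
  have hbound : #F ≤ n * S.sup F.boundaryCard := hFg.trans (F.boundaryCard_le_of_mem_wordBall hg)
  have hpos : 0 < n * S.sup F.boundaryCard := hF.card_pos.trans_le hbound
  have hS : S.Nonempty := nonempty_iff_ne_empty.2 (by rintro rfl; simp at hpos)
  obtain ⟨s, hs, hsup⟩ := S.exists_mem_eq_sup hS F.boundaryCard
  refine ⟨s, hs, ?_⟩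
  rw [div_le_iff₀ (by exact_mod_cast Nat.pos_of_ne_zero (by rintro rfl; simp at hpos))]
  have hs : #F ≤ F.boundaryCard s * n := by rwa [← hsup, mul_comm]
  exact_mod_cast hs

/-- Coulhon–Saloff-Coste inequality: if `G` is generated by the finite set `S`,
`F ⊆ G` is finite nonempty and `v(n) = |B(n)| ≥ 2|F|`, then some `s ∈ S` satisfies
`|F △ F·s| ≥ |F|/n`. -/
theorem coulhon_saloff_coste {G : Type*} [Group G] [DecidableEq G]
    (S : Finset G) (hgen : Subgroup.closure (S : Set G) = ⊤)
    (F : Finset G) (hF : F.Nonempty) (n : ℕ) (hn : 0 < n)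
    (hv : 2 * F.card ≤ Nat.card (wordBall S n)) :
    ∃ s ∈ S, (F.card : ℝ) / n ≤ ((symmDiff F (F.image fun f => f * s)).card : ℝ) :=
  coulhon_saloff_coste_general S F hF n hv
end

section
/- Let G be a finitely generated group of subexponential growth and N ⊴ G a normal subgroup with G/N ≅ ℤ. Then N is finitely generated. -/
section WordBall

variable {G : Type*} [Group G] {S : Finset G}

theorem wordBall_mono {m n : ℕ} (h : m ≤ n) : wordBall S m ⊆ wordBall S n := by
  rintro g ⟨l, hl, hS, rfl⟩
  exact ⟨l, hl.trans h, hS, rfl⟩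

theorem one_mem_wordBall (S : Finset G) (n : ℕ) : (1 : G) ∈ wordBall S n :=
  ⟨[], by simp, by simp, rfl⟩

theorem mul_mem_wordBall {a b : G} {m n : ℕ} (ha : a ∈ wordBall S m) (hb : b ∈ wordBall S n) :
    a * b ∈ wordBall S (m + n) := by
  obtain ⟨l₁, h₁, hS₁, rfl⟩ := ha
  obtain ⟨l₂, h₂, hS₂, rfl⟩ := hb
  refine ⟨l₁ ++ l₂, by simp only [List.length_append]; omega, ?_, List.prod_append⟩
  simp only [List.mem_append]
  rintro x (hx | hx)
  exacts [hS₁ x hx, hS₂ x hx]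

theorem inv_mem_wordBall {a : G} {n : ℕ} (ha : a ∈ wordBall S n) : a⁻¹ ∈ wordBall S n := by
  obtain ⟨l, hl, hS, rfl⟩ := ha
  refine ⟨(l.map (·⁻¹)).reverse, by simpa using hl, ?_, (List.prod_inv_reverse l).symm⟩
  simp only [List.mem_reverse, List.mem_map]
  rintro _ ⟨x, hx, rfl⟩
  simpa [or_comm] using hS x hx

theorem list_prod_mem_wordBall {l : List G} {n : ℕ} (h : ∀ x ∈ l, x ∈ wordBall S n) :
    l.prod ∈ wordBall S (l.length * n) := by
  induction l with
  | nil => exact one_mem_wordBall S _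
  | cons a l ih =>
    simpa [add_mul, add_comm] using
      mul_mem_wordBall (h a List.mem_cons_self) (ih fun x hx => h x (List.mem_cons_of_mem a hx))

theorem exists_mem_wordBall (hgen : Subgroup.closure (S : Set G) = ⊤) (g : G) :
    ∃ n, g ∈ wordBall S n := by
  induction hgen ▸ Subgroup.mem_top g using Subgroup.closure_induction with
  | mem x hx => exact ⟨1, [x], by simp, by simpa using Or.inl hx, by simp⟩
  | one => exact ⟨0, one_mem_wordBall S 0⟩
  | mul x y _ _ hx hy =>
    obtain ⟨m, hm⟩ := hx
    obtain ⟨n, hn⟩ := hy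
    exact ⟨m + n, mul_mem_wordBall hm hn⟩
  | inv x _ hx =>
    obtain ⟨n, hn⟩ := hx
    exact ⟨n, inv_mem_wordBall hn⟩

theorem finite_wordBall (S : Finset G) (n : ℕ) : (wordBall S n).Finite := by
  classical
  let A : Finset G := S ∪ S.image (·⁻¹)
  refine ((List.finite_length_le A n).image fun l => (l.map Subtype.val).prod).subset ?_
  rintro _ ⟨l, hl, hS, rfl⟩
  have hA : ∀ x ∈ l, x ∈ A := fun x hx => by
    rcases hS x hx with h | h
    · simp [A, h]
    · exact Finset.mem_union_right _ (Finset.mem_image.2 ⟨_, h, inv_inv x⟩)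
  exact ⟨l.pmap Subtype.mk hA, by simpa using hl, by simp [List.map_pmap]⟩

end WordBall

open Filter Topology in
theorem exists_lt_two_pow_of_tendsto_rpow_inv {a : ℕ → ℕ}
    (h : Tendsto (fun n : ℕ => (a n : ℝ) ^ (1 / (n : ℝ))) atTop (𝓝 1)) {C : ℕ} (hC : 0 < C) :
    ∃ m, a (C * m) < 2 ^ m := by
  set c : ℝ := 2 ^ (C⁻¹ : ℝ)
  have hc : 1 < c := Real.one_lt_rpow (by norm_num) (by positivity)
  have hcC : c ^ C = 2 := Real.rpow_inv_natCast_pow (by norm_num) hC.ne'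
  obtain ⟨m, hm, hm0⟩ := ((tendsto_id.const_mul_atTop' hC).eventually
    (h.eventually_lt_const hc)).and (eventually_gt_atTop 0) |>.exists
  refine ⟨m, ?_⟩
  have hn : C * m ≠ 0 := by positivity
  have : (a (C * m) : ℝ) < 2 ^ m := calc
    (a (C * m) : ℝ) = ((a (C * m) : ℝ) ^ (1 / ((C * m : ℕ) : ℝ))) ^ (C * m) := by
      rw [one_div, Real.rpow_inv_natCast_pow (by positivity) hn]
    _ < c ^ (C * m) := pow_lt_pow_left₀ hm (by positivity) hn
    _ = 2 ^ m := by rw [pow_mul, hcC]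
  exact_mod_cast this

-- `selProd v [b₀, …, bₙ₋₁] = v 0 ^ b₀ * v 1 ^ b₁ * ⋯ * v (n - 1) ^ bₙ₋₁`
def selProd {M : Type*} [Monoid M] (v : ℤ → M) : List Bool → M
  | [] => 1
  | b :: bs => (if b then v 0 else 1) * selProd (fun i => v (i + 1)) bs

section SelProd

variable {G : Type*} [Group G]

theorem map_selProd {M N F : Type*} [Monoid M] [Monoid N] [FunLike F M N] [MonoidHomClass F M N]
    (f : F) (v : ℤ → M) (bs : List Bool) :
    f (selProd v bs) = selProd (fun i => f (v i)) bs := by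
  induction bs generalizing v with
  | nil => simp [selProd]
  | cons b bs ih => cases b <;> simp [selProd, ih]

theorem selProd_mem_closure (v : ℤ → G) (bs : List Bool) :
    selProd v bs ∈ Subgroup.closure (v '' Set.Ico 0 bs.length) := by
  induction bs generalizing v with
  | nil => simp [selProd]
  | cons b bs ih =>
    refine mul_mem ?_ (Subgroup.closure_mono ?_ (ih _))
    · split_ifs
      · exact Subgroup.subset_closure ⟨0, by simp, rfl⟩
      · exact one_mem _
    · rintro _ ⟨i, hi, rfl⟩
      exact ⟨i + 1, by simp only [Set.mem_Ico, List.length_cons] at hi ⊢; omega, rfl⟩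

theorem exists_mem_closure_of_selProd_eq (v : ℤ → G) {bs bs' : List Bool}
    (hlen : bs.length = bs'.length) (hne : bs ≠ bs') (heq : selProd v bs = selProd v bs') :
    ∃ k : ℤ, 0 ≤ k ∧ k < bs.length ∧ v k ∈ Subgroup.closure (v '' Set.Ioo k bs.length) := by
  induction bs generalizing bs' v with
  | nil => cases bs' <;> simp_all
  | cons b bs ih =>
    obtain _ | ⟨b', bs'⟩ := bs'
    · simp at hlen
    simp only [List.length_cons, Nat.cast_add, Nat.cast_one] at hlen ⊢
    by_cases hb : b = b'
    · subst hb
      obtain ⟨k, hk0, hkn, hk⟩ := ih (fun i => v (i + 1)) (by omega) (by simpa using hne)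
        (mul_left_cancel heq)
      refine ⟨k + 1, by omega, by omega, Subgroup.closure_mono ?_ hk⟩
      rintro _ ⟨i, hi, rfl⟩
      exact ⟨i + 1, by simp only [Set.mem_Ioo] at hi ⊢; omega, rfl⟩
    · have htail : ∀ c : List Bool, c.length = bs.length →
          selProd (fun i => v (i + 1)) c ∈ Subgroup.closure (v '' Set.Ioo 0 (bs.length + 1)) := by
        intro c hc
        refine Subgroup.closure_mono ?_ (selProd_mem_closure _ c)
        rintro _ ⟨i, hi, rfl⟩
        exact ⟨i + 1, by simp only [Set.mem_Ico, Set.mem_Ioo] at hi ⊢; omega, rfl⟩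
      refine ⟨0, le_rfl, by omega, ?_⟩
      -- one side of `heq` has the factor `v 0`, the other does not
      have h₁ := htail bs rfl
      have h₂ := htail bs' (by omega)
      simp only [selProd] at heq
      cases b <;> cases b' <;> simp only [Bool.false_eq_true, if_true, if_false, one_mul] at heq
      · exact absurd rfl hb
      · rw [eq_mul_inv_of_mul_eq heq.symm]
        exact mul_mem h₁ (inv_mem h₂)
      · rw [eq_mul_inv_of_mul_eq heq]
        exact mul_mem h₂ (inv_mem h₁)
      · exact absurd rfl hb

end SelProd

section Orbit

open Subgroup Set

variable {G : Type*} [Group G]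

theorem zpow_apply_mem_closure_Ioo (σ : MulAut G) (u : G) {k m : ℤ}
    (hk : (σ ^ k) u ∈ closure ((fun i => (σ ^ i) u) '' Ioo k m)) {j : ℤ} (hj : j ≤ k) :
    (σ ^ j) u ∈ closure ((fun i => (σ ^ i) u) '' Ioo k m) := by
  set F := closure ((fun i => (σ ^ i) u) '' Ioo k m)
  have hpred (i : ℤ) : σ⁻¹ ((σ ^ i) u) = (σ ^ (i - 1)) u := by
    rw [← MulAut.mul_apply, ← zpow_neg_one, ← zpow_add, neg_add_eq_sub]
  have hinv : F ≤ F.comap (σ⁻¹ : MulAut G).toMonoidHom := by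
    rw [closure_le]
    rintro _ ⟨i, hi, rfl⟩
    rw [SetLike.mem_coe, mem_comap, MulEquiv.coe_toMonoidHom, hpred]
    obtain h | h := (show k = i - 1 ∨ k < i - 1 by grind)
    · rwa [← h]
    · exact subset_closure ⟨i - 1, ⟨h, by grind⟩, rfl⟩
  induction j, hj using Int.leInductionDown with
  | base => exact hk
  | pred j _ ih => simpa [hpred] using hinv ih

theorem closure_range_zpow_apply_fg (σ : MulAut G) (u : G)
    (h : ∃ k m : ℤ, (σ ^ k) u ∈ closure ((fun i => (σ ^ i) u) '' Ioo k m))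
    (h' : ∃ k m : ℤ, (σ⁻¹ ^ k) u ∈ closure ((fun i => (σ⁻¹ ^ i) u) '' Ioo k m)) :
    (closure (range fun i : ℤ => (σ ^ i) u)).FG := by
  obtain ⟨k, m, hk⟩ := h
  obtain ⟨k', m', hk'⟩ := h'
  set Y := (fun i => (σ ^ i) u) '' Icc (min k (-m')) (max m (-k'))
  refine (fg_iff _).2
    ⟨Y, le_antisymm (closure_mono (image_subset_range _ _)) ?_, (finite_Icc _ _).image _⟩
  rw [closure_le, range_subset_iff]
  intro j
  by_cases hj : j ≤ k
  · refine closure_mono ?_ (zpow_apply_mem_closure_Ioo σ u hk hj)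
    exact image_mono fun i hi => by simp only [mem_Ioo, mem_Icc] at hi ⊢; omega
  by_cases hj' : -j ≤ k'
  · have := zpow_apply_mem_closure_Ioo σ⁻¹ u hk' hj'
    simp only [inv_zpow', neg_neg] at this
    refine closure_mono ?_ this
    rintro _ ⟨i, hi, rfl⟩
    exact ⟨-i, by simp only [mem_Ioo, mem_Icc] at hi ⊢; omega, rfl⟩
  exact subset_closure ⟨j, by simp only [mem_Icc]; omega, rfl⟩

end Orbit

section Conj

open Subgroup Set Filter Topology

variable {G : Type*} [Group G]

theorem prod_map_ite_mul_eq_selProd (t u : G) (bs : List Bool) :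
    (bs.map fun b => (if b then u else 1) * t).prod
      = selProd (fun i => (MulAut.conj t ^ i) u) bs * t ^ bs.length := by
  induction bs with
  | nil => simp [selProd]
  | cons b bs ih =>
    have hshift : selProd (fun i => (MulAut.conj t ^ (i + 1)) u) bs
        = MulAut.conj t (selProd (fun i => (MulAut.conj t ^ i) u) bs) := by
      simp only [map_selProd, add_comm _ (1 : ℤ), zpow_one_add, MulAut.mul_apply]
    rw [List.map_cons, List.prod_cons, ih, selProd, hshift, MulAut.conj_apply, List.length_cons,
      pow_succ', zpow_zero, MulAut.one_apply]
    split_ifs <;> group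

theorem exists_conj_zpow_mem_closure_Ioo {S : Finset G} (hgen : closure (S : Set G) = ⊤)
    (hsubexp : Tendsto (fun n : ℕ => (Nat.card (wordBall S n) : ℝ) ^ (1 / (n : ℝ))) atTop (𝓝 1))
    (t u : G) :
    ∃ k m : ℤ, (MulAut.conj t ^ k) u
      ∈ closure ((fun i => (MulAut.conj t ^ i) u) '' Ioo k m) := by
  obtain ⟨T, ht⟩ := exists_mem_wordBall hgen t
  obtain ⟨L, hu⟩ := exists_mem_wordBall hgen u
  obtain ⟨m, hm⟩ := exists_lt_two_pow_of_tendsto_rpow_inv hsubexp (C := L + T + 1) (by omega)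
  have hword (ε : Fin m → Bool) : ((List.ofFn ε).map fun b => (if b then u else 1) * t).prod
      ∈ wordBall S ((L + T + 1) * m) := by
    refine wordBall_mono ?_ (list_prod_mem_wordBall (n := L + T) ?_)
    · simp only [List.length_map, List.length_ofFn]
      nlinarith
    · simp only [List.mem_map]
      rintro _ ⟨b, -, rfl⟩
      refine mul_mem_wordBall ?_ ht
      split_ifs
      exacts [hu, one_mem_wordBall S L]
  have hnotinj : ¬ Function.Injective fun ε => (⟨_, hword ε⟩ : wordBall S ((L + T + 1) * m)) := by
    intro hinj
    have := (finite_wordBall S ((L + T + 1) * m)).to_subtype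
    exact hm.not_ge (by simpa using Nat.card_le_card_of_injective _ hinj)
  obtain ⟨ε, ε', heq, hne⟩ := Function.not_injective_iff.1 hnotinj
  rw [Subtype.mk.injEq, prod_map_ite_mul_eq_selProd, prod_map_ite_mul_eq_selProd,
    List.length_ofFn, List.length_ofFn] at heq
  obtain ⟨k, -, -, hk⟩ := exists_mem_closure_of_selProd_eq _ (by simp)
    (fun h => hne (List.ofFn_injective h)) (mul_right_cancel heq)
  exact ⟨k, _, hk⟩

end Conj

section Kernel

open Subgroup Set

variable {G : Type*} [Group G]

theorem ker_eq_closure_conj_zpow (φ : G →* Multiplicative ℤ) {S : Set G}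
    (hS : closure S = ⊤) {t : G} (ht : φ t = Multiplicative.ofAdd 1) :
    φ.ker = closure (⋃ s ∈ S,
      range fun i : ℤ => (MulAut.conj t ^ i) (s * t ^ (-(φ s).toAdd))) := by
  set X := ⋃ s ∈ S, range fun i : ℤ => (MulAut.conj t ^ i) (s * t ^ (-(φ s).toAdd))
  have hφt (n : ℤ) : φ (t ^ n) = Multiplicative.ofAdd n := by
    simp [ht, ← ofAdd_zsmul]
  have hconj (n : ℤ) (x : G) : (MulAut.conj t ^ n) x = t ^ n * x * (t ^ n)⁻¹ := by
    rw [← map_zpow, MulAut.conj_apply]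
  have hXker : X ⊆ φ.ker := by
    simp only [X, iUnion_subset_iff, range_subset_iff]
    intro s _ i
    apply Multiplicative.toAdd.injective
    simp [hconj, hφt]
  have hnorm : zpowers t ≤ normalizer (closure X) := by
    rw [le_normalizer_closure_iff]
    intro _ hn x hx
    obtain ⟨n, rfl⟩ := mem_zpowers_iff.1 hn
    simp only [X, mem_iUnion, mem_range] at hx
    obtain ⟨s, hs, i, rfl⟩ := hx
    refine subset_closure (mem_biUnion hs ⟨n + i, ?_⟩)
    dsimp only
    rw [zpow_add, MulAut.mul_apply, hconj n]
  have hsup : closure X ⊔ zpowers t = ⊤ := by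
    rw [eq_top_iff, ← hS, closure_le]
    intro s hs
    have hs' : s * t ^ (-(φ s).toAdd) ∈ X := mem_biUnion hs ⟨0, by simp⟩
    simpa using mul_mem (mem_sup_left (subset_closure hs'))
      (mem_sup_right (zpow_mem_zpowers t (φ s).toAdd))
  refine le_antisymm (fun g hg => ?_) ((closure_le _).2 hXker)
  have hg' : g ∈ ((closure X ⊔ zpowers t : Subgroup G) : Set G) := by simp [hsup]
  rw [coe_mul_of_right_le_normalizer_left _ _ hnorm] at hg'
  obtain ⟨h, hh, _, hn, rfl⟩ := hg'
  obtain ⟨n, rfl⟩ := mem_zpowers_iff.1 hn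
  have hn0 : n = 0 := by
    have := MonoidHom.mem_ker.1 hg
    rw [map_mul, (closure_le _).2 hXker hh, one_mul, hφt] at this
    simpa using this
  simpa [hn0] using hh

end Kernel

/-- Milnor's lemma: if `G` is a finitely generated group of subexponential growth
(`v(n)^{1/n} → 1` for some finite generating set) and `N ⊴ G` with `G/N ≅ ℤ`,
then `N` is finitely generated. -/
theorem milnor_lemma {G : Type*} [Group G]
    (S : Finset G) (hgen : Subgroup.closure (S : Set G) = ⊤)
    (hsubexp : Filter.Tendsto
      (fun n : ℕ => (Nat.card (wordBall S n) : ℝ) ^ (1 / (n : ℝ)))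
      Filter.atTop (nhds 1))
    (N : Subgroup G) [N.Normal] (hquot : Nonempty ((G ⧸ N) ≃* Multiplicative ℤ)) :
    N.FG := by
  obtain ⟨e⟩ := hquot
  let φ : G →* Multiplicative ℤ := (e : G ⧸ N →* Multiplicative ℤ).comp (QuotientGroup.mk' N)
  obtain ⟨t, ht⟩ := (e.surjective.comp (QuotientGroup.mk'_surjective N)) (Multiplicative.ofAdd 1)
  have hker : φ.ker = N := by simp [φ]
  rw [← hker, ker_eq_closure_conj_zpow φ hgen ht]
  simp only [Subgroup.closure_iUnion]
  refine Subgroup.FG.biSup S.finite_toSet _ fun s _ => closure_range_zpow_apply_fg _ _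
    (exists_conj_zpow_mem_closure_Ioo hgen hsubexp t _) ?_
  rw [← map_inv]
  exact exists_conj_zpow_mem_closure_Ioo hgen hsubexp t⁻¹ _
end

section
/- Let G be a countably infinite amenable group. Then there exists an affine isometric action of G on a Hilbert space with no fixed point. Concretely, if (F_n) is a Følner sequence for G and h = (1_{F_n}/√|F_n|)_{n∈ℕ} (an element of the product ∏_n ℓ²(G) not lying in the ℓ²-direct sum H = ℓ²(ℕ×G)), then h − h·g ∈ H for all g ∈ G, and the action f ↦ f·g + h − h·g on H is a fixed-point-free affine action. -/
/-!
For a finite nonempty `F ⊆ G` let `u F = 1_F / √|F|`, a unit vector of `ℓ²(G)` with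
`‖u F · g - u F‖² = |F g ∆ F| / |F|`. Along a subsequence of the Følner sequence on which these
ratios are summable for every `g` (possible as `G` is countable), the family `u = (u (F n))ₙ` is not
in `ℓ²(ℕ, ℓ²(G))` while every `u · g - u` is, so `f ↦ (f + u) · g - u` is an affine isometric action
on `ℓ²(ℕ, ℓ²(G))`. If `f` were a fixed point, each `f n + u (F n)` would be a right-invariant
vector of `ℓ²(G)`, hence zero because `G` is infinite, and `u = -f` would lie in `ℓ²`.
Reindexing `ℓ²(G)` by `ℕ` moves the construction into `Type`.
-/

open scoped symmDiff ENNReal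
open Filter Finset

theorem memℓp_comp_equiv_iff {α β E : Type*} [NormedAddCommGroup E] {p : ℝ≥0∞} (e : α ≃ β)
    {f : β → E} : Memℓp (f ∘ e) p ↔ Memℓp f p := by
  obtain (rfl | rfl | hp) := p.trichotomy
  · simp only [memℓp_zero_iff]
    exact ⟨fun h => Set.finite_of_finite_preimage h (e.surjective.range_eq ▸ Set.subset_univ _),
      fun h => h.preimage e.injective.injOn⟩
  · simp only [memℓp_infty_iff]
    exact iff_of_eq (congrArg BddAbove (e.surjective.range_comp fun b => ‖f b‖))
  · rw [memℓp_gen_iff hp, memℓp_gen_iff hp]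
    exact e.summable_iff (f := fun b => ‖f b‖ ^ p.toReal)

theorem memℓp_two_iff {α E : Type*} [NormedAddCommGroup E] {f : α → E} :
    Memℓp f 2 ↔ Summable fun i => ‖f i‖ ^ 2 := by
  simp [memℓp_gen_iff]

theorem not_memℓp_of_norm_eq_one {α E : Type*} [Infinite α] [NormedAddCommGroup E]
    {p : ℝ≥0∞} (hp : 0 < p.toReal) {f : α → E} (hf : ∀ i, ‖f i‖ = 1) : ¬ Memℓp f p := by
  simp [memℓp_gen_iff hp, hf, summable_const_iff]

namespace lp

section Reindex

variable {α β : Type*} (𝕜 : Type*) {E : Type*} [NormedField 𝕜] [NormedAddCommGroup E]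
  [NormedSpace 𝕜 E] {p : ℝ≥0∞} [Fact (1 ≤ p)]

def compEquiv (e : α ≃ β) : lp (fun _ : β => E) p ≃ₗᵢ[𝕜] lp (fun _ : α => E) p where
  toFun f := ⟨f ∘ e, (memℓp_comp_equiv_iff e).2 (lp.memℓp f)⟩
  invFun f := ⟨f ∘ e.symm, (memℓp_comp_equiv_iff e.symm).2 (lp.memℓp f)⟩
  map_add' _ _ := rfl
  map_smul' _ _ := rfl
  left_inv f := lp.ext <| funext fun b => by simp
  right_inv f := lp.ext <| funext fun a => by simp
  norm_map' f := by
    obtain (hp0 | rfl | hp) := p.trichotomy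
    · have := (Fact.out : 1 ≤ p); simp [hp0] at this
    · rw [lp.norm_eq_ciSup, lp.norm_eq_ciSup]
      exact e.iSup_comp (g := fun b => ‖f b‖)
    · rw [lp.norm_eq_tsum_rpow hp, lp.norm_eq_tsum_rpow hp]
      exact congrArg (· ^ _) (e.tsum_eq fun b => ‖f b‖ ^ p.toReal)

end Reindex

section PiCongrRight

variable {α 𝕜 : Type*} {E F : α → Type*} [NormedField 𝕜] [∀ i, NormedAddCommGroup (E i)]
  [∀ i, NormedSpace 𝕜 (E i)] [∀ i, NormedAddCommGroup (F i)] [∀ i, NormedSpace 𝕜 (F i)]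
  {p : ℝ≥0∞} [Fact (1 ≤ p)]

def piCongrRight (T : ∀ i, E i ≃ₗᵢ[𝕜] F i) : lp E p ≃ₗᵢ[𝕜] lp F p where
  toFun f := ⟨fun i => T i (f i), (lp.memℓp f).mono' fun i => (T i).norm_map (f i) |>.le⟩
  invFun f := ⟨fun i => (T i).symm (f i),
    (lp.memℓp f).mono' fun i => (T i).symm.norm_map (f i) |>.le⟩
  map_add' f g := lp.ext <| funext fun i => (T i).map_add (f i) (g i)
  map_smul' c f := lp.ext <| funext fun i => (T i).map_smul c (f i)
  left_inv f := lp.ext <| funext fun i => by simp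
  right_inv f := lp.ext <| funext fun i => by simp
  norm_map' f := by
    have hp : p ≠ 0 := (zero_lt_one.trans_le Fact.out).ne'
    exact le_antisymm (lp.norm_mono hp fun i => (T i).norm_map (f i) |>.le)
      (lp.norm_mono hp fun i => (T i).norm_map (f i) |>.ge)

end PiCongrRight

section RightTranslation

variable {G : Type*} [Group G] (𝕜 : Type*) {E : Type*} [NormedField 𝕜] [NormedAddCommGroup E]
  [NormedSpace 𝕜 E] {p : ℝ≥0∞} [Fact (1 ≤ p)]

def rightTranslation (g : G) : lp (fun _ : G => E) p ≃ₗᵢ[𝕜] lp (fun _ : G => E) p :=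
  compEquiv 𝕜 (Equiv.mulRight g⁻¹)

@[simp]
theorem rightTranslation_apply (g : G) (f : lp (fun _ : G => E) p) (x : G) :
    rightTranslation 𝕜 g f x = f (x * g⁻¹) := rfl

theorem rightTranslation_one (f : lp (fun _ : G => E) p) : rightTranslation 𝕜 1 f = f :=
  lp.ext <| funext fun x => by simp

theorem rightTranslation_mul (g h : G) (f : lp (fun _ : G => E) p) :
    rightTranslation 𝕜 (g * h) f = rightTranslation 𝕜 h (rightTranslation 𝕜 g f) :=
  lp.ext <| funext fun x => by simp [mul_assoc]

theorem eq_zero_of_forall_rightTranslation_eq [Infinite G] (hp : p ≠ ∞)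
    {f : lp (fun _ : G => E) p} (hf : ∀ g, rightTranslation 𝕜 g f = f) : f = 0 := by
  have hconst : ∀ x, f x = f 1 := fun x => by
    simpa using congrArg (· 1) (congrArg (⇑) (hf x⁻¹))
  have hp0 : 0 < p.toReal := ENNReal.toReal_pos (zero_lt_one.trans_le Fact.out).ne' hp
  have hsum := (lp.memℓp f).summable hp0
  simp only [hconst, summable_const_iff, Real.rpow_eq_zero (norm_nonneg _) hp0.ne',
    norm_eq_zero] at hsum
  exact lp.ext <| funext fun x => by simp [hconst x, hsum]

end RightTranslation

section NormalizedIndicator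

variable {α : Type*}

theorem norm_sq_eq_sum_of_support_subset {E : Type*} [NormedAddCommGroup E]
    (f : lp (fun _ : α => E) 2) {s : Finset α} (hs : ∀ a ∉ s, f a = 0) :
    ‖f‖ ^ 2 = ∑ a ∈ s, ‖f a‖ ^ 2 := by
  have := lp.norm_rpow_eq_tsum (p := 2) (by norm_num) f
  simp only [ENNReal.toReal_ofNat, Real.rpow_two] at this
  rw [this, tsum_eq_sum fun a ha => by simp [hs a ha]]

noncomputable def normalizedIndicator (s : Finset α) : lp (fun _ : α => ℝ) 2 :=
  ⟨(s : Set α).indicator fun _ => (√(#s : ℝ))⁻¹,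
    (memℓp_zero (s.finite_toSet.subset Set.support_indicator_subset)).of_exponent_ge zero_le⟩

theorem normalizedIndicator_apply_of_mem {s : Finset α} {a : α} (ha : a ∈ s) :
    normalizedIndicator s a = (√(#s : ℝ))⁻¹ :=
  Set.indicator_of_mem (mem_coe.2 ha) fun _ => (√(#s : ℝ))⁻¹

theorem normalizedIndicator_apply_of_notMem {s : Finset α} {a : α} (ha : a ∉ s) :
    normalizedIndicator s a = 0 :=
  Set.indicator_of_notMem (mt mem_coe.1 ha) fun _ => (√(#s : ℝ))⁻¹

theorem norm_normalizedIndicator {s : Finset α} (hs : s.Nonempty) :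
    ‖normalizedIndicator s‖ = 1 := by
  have hsq : ‖normalizedIndicator s‖ ^ 2 = 1 := by
    rw [norm_sq_eq_sum_of_support_subset _ fun a => normalizedIndicator_apply_of_notMem,
      sum_congr rfl fun a => congrArg (‖·‖ ^ 2) ∘ normalizedIndicator_apply_of_mem]
    simp [inv_pow, hs.card_pos.ne']
  exact (pow_eq_one_iff_of_nonneg (norm_nonneg _) two_ne_zero).1 hsq

theorem norm_normalizedIndicator_sub_sq [DecidableEq α] {s t : Finset α} (hst : #s = #t) :
    ‖normalizedIndicator s - normalizedIndicator t‖ ^ 2 = #(s ∆ t) / #s := by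
  have hout : ∀ a ∉ s ∆ t, (normalizedIndicator s - normalizedIndicator t) a = 0 := by
    intro a ha
    rw [mem_symmDiff, not_or, not_and_not_right, not_and_not_right] at ha
    by_cases has : a ∈ s
    · simp [normalizedIndicator_apply_of_mem, has, ha.1 has, hst]
    · simp [normalizedIndicator_apply_of_notMem, has, mt ha.2 has]
  have hin : ∀ a ∈ s ∆ t,
      ‖(normalizedIndicator s - normalizedIndicator t) a‖ ^ 2 = (#s : ℝ)⁻¹ := by
    intro a ha
    rcases mem_symmDiff.1 ha with ⟨has, hat⟩ | ⟨hat, has⟩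
    · simp [normalizedIndicator_apply_of_mem, normalizedIndicator_apply_of_notMem, has, hat]
    · simp [normalizedIndicator_apply_of_mem, normalizedIndicator_apply_of_notMem, has, hat, hst]
  rw [norm_sq_eq_sum_of_support_subset _ hout, sum_congr rfl hin, sum_const, nsmul_eq_mul,
    div_eq_mul_inv]

theorem rightTranslation_normalizedIndicator {G : Type*} [Group G] [DecidableEq G]
    (s : Finset G) (g : G) :
    rightTranslation ℝ g (normalizedIndicator s) = normalizedIndicator (s.image (· * g)) := by
  have hmem : ∀ x, x ∈ s.image (· * g) ↔ x * g⁻¹ ∈ s := fun x =>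
    ⟨fun h => by obtain ⟨y, hy, rfl⟩ := mem_image.1 h; simpa,
      fun h => mem_image.2 ⟨_, h, by simp⟩⟩
  have hcard : #(s.image (· * g)) = #s := card_image_of_injective s (mul_left_injective g)
  ext x
  by_cases hx : x * g⁻¹ ∈ s
  · rw [rightTranslation_apply, normalizedIndicator_apply_of_mem hx,
      normalizedIndicator_apply_of_mem ((hmem x).2 hx), hcard]
  · rw [rightTranslation_apply, normalizedIndicator_apply_of_notMem hx,
      normalizedIndicator_apply_of_notMem (mt (hmem x).1 hx)]

end NormalizedIndicator

end lp

theorem exists_summable_comp_of_tendsto_zero {ι E : Type*} [Countable ι] [NormedAddCommGroup E]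
    [CompleteSpace E] {r : ι → ℕ → E} (hr : ∀ i, Tendsto (r i) atTop (nhds 0)) :
    ∃ N : ℕ → ℕ, ∀ i, Summable fun n => r i (N n) := by
  obtain ⟨e, he⟩ := Countable.exists_injective_nat ι
  have hsmall : ∀ k : ℕ, ∃ m, ∀ i, e i ≤ k → ‖r i m‖ ≤ (1 / 2) ^ k := fun k => by
    have hfin : {i | e i ≤ k}.Finite := (Set.finite_Iic k).preimage he.injOn
    have hpos : (0 : ℝ) < (1 / 2) ^ k := by positivity
    have hev := (eventually_all_finite hfin).2 fun i _ =>
      (tendsto_zero_iff_norm_tendsto_zero.1 (hr i)).eventually (ge_mem_nhds hpos)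
    simpa using hev.exists
  choose N hN using hsmall
  refine ⟨N, fun i => Summable.of_norm_bounded_eventually_nat summable_geometric_two ?_⟩
  filter_upwards [eventually_ge_atTop (e i)] with n hn using hN n i hn

section AffineAction

variable {G 𝕜 V : Type*} [NormedField 𝕜] [NormedAddCommGroup V] [NormedSpace 𝕜 V]
  {p : ℝ≥0∞} [Fact (1 ≤ p)] (π : G → V ≃ₗᵢ[𝕜] V) (u : ℕ → V)
  (hu : ∀ g, Memℓp (fun n => π g (u n) - u n) p)

noncomputable def affineAction (g : G) : lp (fun _ : ℕ => V) p ≃ᵃⁱ[𝕜] lp (fun _ : ℕ => V) p :=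
  (lp.piCongrRight fun _ => π g).toAffineIsometryEquiv.trans
    (AffineIsometryEquiv.constVAdd 𝕜 _ ⟨_, hu g⟩)

theorem affineAction_apply (g : G) (f : lp (fun _ : ℕ => V) p) (n : ℕ) :
    affineAction π u hu g f n = π g (f n + u n) - u n := by
  change π g (u n) - u n + π g (f n) = _
  rw [map_add]
  abel

theorem affineAction_one [Monoid G] (hπ : ∀ v, π 1 v = v) (f : lp (fun _ : ℕ => V) p) :
    affineAction π u hu 1 f = f :=
  lp.ext <| funext fun n => by simp [affineAction_apply, hπ]

theorem affineAction_mul [Monoid G] (hπ : ∀ g h v, π (g * h) v = π h (π g v)) (g h : G)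
    (f : lp (fun _ : ℕ => V) p) :
    affineAction π u hu (g * h) f = affineAction π u hu h (affineAction π u hu g f) :=
  lp.ext <| funext fun n => by simp [affineAction_apply, hπ]

theorem memℓp_of_forall_isFixedPt_affineAction (hπ : ∀ v, (∀ g, π g v = v) → v = 0)
    {f : lp (fun _ : ℕ => V) p} (hf : ∀ g, Function.IsFixedPt (affineAction π u hu g) f) :
    Memℓp u p := by
  have hu_eq : u = -⇑f := funext fun n => by
    refine eq_neg_of_add_eq_zero_right (hπ _ fun g => ?_)
    have := congrArg (· n) (congrArg (⇑) (hf g))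
    rw [affineAction_apply] at this
    exact sub_eq_iff_eq_add.1 this
  exact hu_eq ▸ (lp.memℓp f).neg

end AffineAction

/-- A countably infinite amenable group (given by a Følner sequence) admits an
affine isometric action on a real Hilbert space with no fixed point. -/
theorem amenable_affine_action_no_fixed_point {G : Type*} [Group G] [Countable G]
    [Infinite G] [DecidableEq G]
    (hFol : ∃ F : ℕ → Finset G, (∀ n, (F n).Nonempty) ∧ ∀ g : G,
      Filter.Tendsto
        (fun n => (((((F n).image fun x => x * g)) ∆ (F n)).card : ℝ) / (F n).card)
        Filter.atTop (nhds 0)) :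
    ∃ (H : Type) (_ : NormedAddCommGroup H) (_ : InnerProductSpace ℝ H)
      (_ : CompleteSpace H) (ρ : G → H → H),
      (∀ g : G, Isometry (ρ g)) ∧
      (∀ x : H, ρ 1 x = x) ∧
      (∀ g h : G, ∀ x : H, ρ (g * h) x = ρ h (ρ g x)) ∧
      (∀ (g : G) (x y : H) (t : ℝ), ρ g (t • x + (1 - t) • y) = t • ρ g x + (1 - t) • ρ g y) ∧
      ¬ ∃ x : H, ∀ g : G, ρ g x = x := by
  obtain ⟨F, hne, hfol⟩ := hFol
  obtain ⟨N, hN⟩ := exists_summable_comp_of_tendsto_zero hfol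
  obtain ⟨E⟩ : Nonempty (ℕ ≃ G) := nonempty_equiv_of_countable
  let e : lp (fun _ : G => ℝ) 2 ≃ₗᵢ[ℝ] lp (fun _ : ℕ => ℝ) 2 := lp.compEquiv ℝ E
  let π (g : G) := e.symm.trans ((lp.rightTranslation ℝ g).trans e)
  let u (n : ℕ) := e (lp.normalizedIndicator (F (N n)))
  have hu : ∀ g, Memℓp (fun n => π g (u n) - u n) 2 := fun g => by
    rw [memℓp_two_iff]
    refine (hN g).congr fun n => ?_
    rw [← card_image_of_injective (F (N n)) (mul_left_injective g),
      ← lp.norm_normalizedIndicator_sub_sq (card_image_of_injective _ (mul_left_injective g)),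
      ← lp.rightTranslation_normalizedIndicator]
    simp [π, u, ← map_sub]
  refine ⟨lp (fun _ : ℕ => lp (fun _ : ℕ => ℝ) 2) 2, inferInstance, inferInstance, inferInstance,
    fun g => affineAction π u hu g, fun g => (affineAction π u hu g).isometry,
    affineAction_one π u hu (by simp [π, lp.rightTranslation_one]),
    affineAction_mul π u hu (by simp [π, lp.rightTranslation_mul]),
    fun g x y t => Convex.combo_affine_apply
      (f := (affineAction π u hu g).toAffineEquiv.toAffineMap) (add_sub_cancel t 1), ?_⟩
  rintro ⟨x, hx⟩
  refine not_memℓp_of_norm_eq_one (by norm_num) (fun n => ?_)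
    (memℓp_of_forall_isFixedPt_affineAction π u hu (fun v hv => ?_) hx)
  · simp [u, lp.norm_normalizedIndicator (hne _)]
  · have := lp.eq_zero_of_forall_rightTranslation_eq ℝ ENNReal.ofNat_ne_top (f := e.symm v)
      fun g => by simpa [π] using congrArg e.symm (hv g)
    simpa using this
end

section
/- Let G be an abelian group acting by continuous affine maps on a nonempty convex compact subset K of a topological vector space. Then there is a G-fixed point in K. -/
/-!
For `g ∈ G` consider the Cesàro means `A_{g,n} x = (1/n) ∑_{k<n} g^k x`. They are continuous
self-maps of `K`, and since `G` is abelian and each `g` is affine, all of them commute with each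
other and with `G`. Commuting self-maps of `K` have images with the finite intersection property,
so by compactness some `x` lies in every `A_{g,n} K`. Writing `x = A_{g,n} y` gives
`n • (g x - x) = g^n y - y ∈ K - K`; as `K - K` is bounded, `g x - x = 0`.
-/

open Finset Set Filter Topology

section CesaroMean

variable {E F : Type*} [AddCommGroup E] [Module ℝ E] [AddCommGroup F] [Module ℝ F]

noncomputable def cesaroMean (n : ℕ) (p : ℕ → E) : E := (n : ℝ)⁻¹ • ∑ k ∈ range n, p k

def AffineOn (K : Set E) (f : E → F) : Prop :=
  ∀ x ∈ K, ∀ y ∈ K, ∀ t ∈ Icc (0 : ℝ) 1, f (t • x + (1 - t) • y) = t • f x + (1 - t) • f y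

lemma cesaroMean_succ_succ (n : ℕ) (p : ℕ → E) :
    cesaroMean (n + 1 + 1) p =
      ((n + 1 : ℝ) / (n + 2)) • cesaroMean (n + 1) p + (1 - (n + 1 : ℝ) / (n + 2)) • p (n + 1) := by
  have hmean : ((n + 1 : ℝ) / (n + 2)) * ((n + 1 : ℕ) : ℝ)⁻¹ = ((n + 1 + 1 : ℕ) : ℝ)⁻¹ := by
    push_cast; field_simp; ring
  have hlast : 1 - (n + 1 : ℝ) / (n + 2) = ((n + 1 + 1 : ℕ) : ℝ)⁻¹ := by
    push_cast; field_simp; ring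
  rw [cesaroMean, cesaroMean, sum_range_succ _ (n + 1), smul_add, smul_smul, hmean, hlast]

lemma Convex.cesaroMean_mem {K : Set E} (hK : Convex ℝ K) {p : ℕ → E} (hp : ∀ k, p k ∈ K)
    (n : ℕ) : cesaroMean (n + 1) p ∈ K := by
  rw [cesaroMean, smul_sum]
  exact hK.sum_mem (fun _ _ => by positivity) (by simp [field]) (fun k _ => hp k)

lemma cesaroMean_comm (m n : ℕ) (q : ℕ → ℕ → E) :
    cesaroMean m (fun j => cesaroMean n (q j)) = cesaroMean n (fun k => cesaroMean m (q · k)) := by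
  simp only [cesaroMean, ← smul_sum]
  rw [smul_comm, sum_comm]

lemma cesaroMean_shift_sub (n : ℕ) (p : ℕ → E) :
    cesaroMean n (fun k => p (k + 1)) - cesaroMean n p = (n : ℝ)⁻¹ • (p n - p 0) := by
  rw [cesaroMean, cesaroMean, ← smul_sub, ← sum_sub_distrib, sum_range_sub]

lemma AffineOn.map_cesaroMean {K : Set E} {f : E → F} (hf : AffineOn K f) (hK : Convex ℝ K)
    {p : ℕ → E} (hp : ∀ k, p k ∈ K) (n : ℕ) :
    f (cesaroMean (n + 1) p) = cesaroMean (n + 1) (fun k => f (p k)) := by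
  induction n with
  | zero => simp [cesaroMean]
  | succ n ih =>
    have ht : (n + 1 : ℝ) / (n + 2) ∈ Icc (0 : ℝ) 1 :=
      ⟨by positivity, div_le_one_of_le₀ (by linarith) (by positivity)⟩
    rw [cesaroMean_succ_succ, hf _ (hK.cesaroMean_mem hp n) _ (hp _) _ ht, ih,
      cesaroMean_succ_succ]

end CesaroMean

lemma eq_zero_of_forall_smul_mem_of_isVonNBounded {E : Type*} [AddCommGroup E] [Module ℝ E]
    [TopologicalSpace E] [T1Space E] {S : Set E} (hS : Bornology.IsVonNBounded ℝ S) {v : E}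
    (h : ∀ n : ℕ, ((n : ℝ) + 1) • v ∈ S) : v = 0 := by
  have hlim : Tendsto (fun n : ℕ => ((n : ℝ) + 1)⁻¹ • ((n : ℝ) + 1) • v) atTop (𝓝 0) :=
    hS.smul_tendsto_zero (Eventually.of_forall h)
      (by simpa using tendsto_one_div_add_atTop_nhds_zero_nat (𝕜 := ℝ))
  have hconst (n : ℕ) : ((n : ℝ) + 1)⁻¹ • ((n : ℝ) + 1) • v = v :=
    inv_smul_smul₀ (by positivity) v
  simpa only [hconst, tendsto_const_nhds_iff] using hlim

lemma nonempty_inter_biInter_image_of_commute {α ι : Type*} {K : Set α} (hne : K.Nonempty)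
    {f : ι → α → α} (hmaps : ∀ i, MapsTo (f i) K K)
    (hcomm : ∀ i j, ∀ x ∈ K, f i (f j x) = f j (f i x)) (u : Finset ι) :
    (K ∩ ⋂ i ∈ u, f i '' K).Nonempty := by
  classical
  induction u using Finset.induction_on with
  | empty => simpa using hne
  | @insert a u _ ih =>
    obtain ⟨x, hxK, hxI⟩ := ih
    simp only [mem_iInter] at hxI
    refine ⟨f a x, hmaps a hxK, ?_⟩
    simp only [mem_iInter, Finset.mem_insert]
    rintro i (rfl | hi)
    · exact mem_image_of_mem _ hxK
    · obtain ⟨z, hzK, rfl⟩ := hxI i hi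
      exact ⟨f a z, hmaps a hzK, hcomm i a z hzK⟩

lemma apply_comm_of_map_mul {α G : Type*} [CommMonoid G] {K : Set α} {T : G → α → α}
    (hmul : ∀ g h : G, ∀ x ∈ K, T (g * h) x = T g (T h x)) (g h : G) {x : α} (hx : x ∈ K) :
    T g (T h x) = T h (T g x) := by
  rw [← hmul _ _ _ hx, mul_comm, hmul _ _ _ hx]

section OrbitMean

variable {E : Type*} [AddCommGroup E] [Module ℝ E] {G : Type*} {K : Set E} {T : G → E → E}

section Monoid

variable [Monoid G]

noncomputable def orbitMean (T : G → E → E) (g : G) (n : ℕ) (x : E) : E :=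
  cesaroMean n (fun k => T (g ^ k) x)

lemma mapsTo_orbitMean (hK : Convex ℝ K) (hmaps : ∀ g, MapsTo (T g) K K) (g : G) (n : ℕ) :
    MapsTo (orbitMean T g (n + 1)) K K :=
  fun _ hx => hK.cesaroMean_mem (fun _ => hmaps _ hx) n

lemma continuousOn_orbitMean [TopologicalSpace E] [ContinuousAdd E] [ContinuousConstSMul ℝ E]
    (hcont : ∀ g, ContinuousOn (T g) K) (g : G) (n : ℕ) : ContinuousOn (orbitMean T g n) K :=
  (continuousOn_finsetSum _ fun k _ => hcont (g ^ k)).const_smul _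

end Monoid

variable [CommMonoid G]

lemma apply_orbitMean (hK : Convex ℝ K) (hmaps : ∀ g, MapsTo (T g) K K)
    (haff : ∀ g, AffineOn K (T g)) (hmul : ∀ g h : G, ∀ x ∈ K, T (g * h) x = T g (T h x))
    (g h : G) (n : ℕ) {x : E} (hx : x ∈ K) :
    T g (orbitMean T h (n + 1) x) = orbitMean T h (n + 1) (T g x) := by
  rw [orbitMean, (haff g).map_cesaroMean hK (fun k => hmaps _ hx)]
  simp only [orbitMean, apply_comm_of_map_mul hmul g _ hx]

lemma orbitMean_comm (hK : Convex ℝ K) (hmaps : ∀ g, MapsTo (T g) K K)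
    (haff : ∀ g, AffineOn K (T g)) (hmul : ∀ g h : G, ∀ x ∈ K, T (g * h) x = T g (T h x))
    (g h : G) (m n : ℕ) {x : E} (hx : x ∈ K) :
    orbitMean T g (m + 1) (orbitMean T h (n + 1) x) =
      orbitMean T h (n + 1) (orbitMean T g (m + 1) x) := by
  calc orbitMean T g (m + 1) (orbitMean T h (n + 1) x)
      = cesaroMean (m + 1) (fun j => cesaroMean (n + 1) (fun k => T (h ^ k) (T (g ^ j) x))) := by
        rw [orbitMean]
        simp only [apply_orbitMean hK hmaps haff hmul _ _ _ hx]
        rfl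
    _ = cesaroMean (n + 1) (fun k => cesaroMean (m + 1) (fun j => T (g ^ j) (T (h ^ k) x))) := by
        rw [cesaroMean_comm]
        simp only [apply_comm_of_map_mul hmul (h ^ _) (g ^ _) hx]
    _ = orbitMean T h (n + 1) (orbitMean T g (m + 1) x) := by
        rw [orbitMean]
        simp only [apply_orbitMean hK hmaps haff hmul _ _ _ hx]
        rfl

lemma smul_apply_orbitMean_sub (hK : Convex ℝ K) (hmaps : ∀ g, MapsTo (T g) K K)
    (haff : ∀ g, AffineOn K (T g)) (hone : ∀ x ∈ K, T 1 x = x)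
    (hmul : ∀ g h : G, ∀ x ∈ K, T (g * h) x = T g (T h x)) (g : G) (n : ℕ) {y : E} (hy : y ∈ K) :
    ((n : ℝ) + 1) • (T g (orbitMean T g (n + 1) y) - orbitMean T g (n + 1) y) =
      T (g ^ (n + 1)) y - y := by
  have hshift (k : ℕ) : T (g ^ k) (T g y) = T (g ^ (k + 1)) y := by rw [← hmul _ _ _ hy, pow_succ]
  rw [apply_orbitMean hK hmaps haff hmul _ _ _ hy, orbitMean, orbitMean]
  have htelescope := cesaroMean_shift_sub (n + 1) fun k => T (g ^ k) y
  beta_reduce at htelescope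
  simp only [hshift]
  rw [htelescope, pow_zero, hone y hy, smul_smul]
  push_cast
  rw [mul_inv_cancel₀ (by positivity), one_smul]

end OrbitMean

/-- Markov–Kakutani fixed point theorem: an abelian group acting by continuous
affine maps on a nonempty convex compact subset `K` of a Hausdorff topological
real vector space has a fixed point in `K`. -/
theorem markov_kakutani {E : Type*} [AddCommGroup E] [Module ℝ E]
    [TopologicalSpace E] [IsTopologicalAddGroup E] [ContinuousSMul ℝ E] [T2Space E]
    {G : Type*} [CommGroup G]
    (K : Set E) (hconv : Convex ℝ K) (hcomp : IsCompact K) (hne : K.Nonempty)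
    (T : G → E → E)
    (hcont : ∀ g : G, ContinuousOn (T g) K)
    (hmaps : ∀ g : G, Set.MapsTo (T g) K K)
    (haff : ∀ g : G, ∀ x ∈ K, ∀ y ∈ K, ∀ t ∈ Set.Icc (0 : ℝ) 1,
      T g (t • x + (1 - t) • y) = t • T g x + (1 - t) • T g y)
    (hone : ∀ x ∈ K, T 1 x = x)
    (hmul : ∀ g h : G, ∀ x ∈ K, T (g * h) x = T g (T h x)) :
    ∃ x ∈ K, ∀ g : G, T g x = x := by
  let A : G × ℕ → E → E := fun i => orbitMean T i.1 (i.2 + 1)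
  have hclosed (i : G × ℕ) : IsClosed (A i '' K) :=
    (hcomp.image_of_continuousOn (continuousOn_orbitMean hcont _ _)).isClosed
  have hfinite := nonempty_inter_biInter_image_of_commute (f := A) hne
    (fun i => mapsTo_orbitMean hconv hmaps i.1 i.2)
    (fun i j _ hx => orbitMean_comm hconv hmaps haff hmul _ _ _ _ hx)
  obtain ⟨x, hxK, hx⟩ := hcomp.inter_iInter_nonempty (fun i => A i '' K) hclosed hfinite
  rw [mem_iInter] at hx
  have hbdd := (hcomp.isVonNBounded ℝ).sub (hcomp.isVonNBounded ℝ)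
  refine ⟨x, hxK, fun g => sub_eq_zero.1 (eq_zero_of_forall_smul_mem_of_isVonNBounded hbdd ?_)⟩
  intro n
  obtain ⟨y, hy, rfl⟩ := hx (g, n)
  rw [smul_apply_orbitMean_sub hconv hmaps haff hone hmul g n hy]
  exact sub_mem_sub (hmaps _ hy) hy
end

section
/- Let n ≥ 1 and let Y be the set of cycles of permutations of {1,…,n} (pairs (i,σ) with σ ∈ Sym(n), modulo identifying (i,σ) ∼ (j,σ) when i and j lie in the same cycle of σ), and let X_i ⊆ Y be the image of {i} × Sym(n). Then |Y| = Σ_{i=1}^n n!/i ≤ (1 + log n)·n!, and for every I ⊆ {1,…,n} and i ∈ I, |X_i \ ⋃_{j ∈ I∖{i}} X_j| = n!/|I| ≥ |Y|/((1 + log n)·|I|). -/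
/-- The set of cycles of permutations of `{1,…,n}`: pairs (orbit, permutation)
where the first component is an orbit of the cyclic group generated by the
permutation. This encodes `{1,…,n} × Sym(n)` modulo identifying `(i,σ) ∼ (j,σ)`
when `i, j` lie in the same cycle of `σ`. -/
def permCycles (n : ℕ) : Set (Set (Fin n) × Equiv.Perm (Fin n)) :=
  {p | ∃ i : Fin n, p.1 = {j | ∃ k : ℕ, (p.2 ^ k) i = j}}

/-- The image of `{i} × Sym(n)` in the set of cycles: cycles containing `i`. -/
def permCyclesThrough (n : ℕ) (i : Fin n) : Set (Set (Fin n) × Equiv.Perm (Fin n)) :=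
  {p | p ∈ permCycles n ∧ i ∈ p.1}

open Equiv Finset

namespace PermCyclesOverlapAux

variable {n : ℕ}

/-- Permutations whose cycle through `s` meets `S` only in `s`. -/
def goodPerm (S : Finset (Fin n)) (s : Fin n) : Set (Perm (Fin n)) :=
  {σ | ∀ k : ℕ, (σ ^ k) s ∈ S → (σ ^ k) s = s}

lemma exists_ret (S : Finset (Fin n)) {s : Fin n} (hs : s ∈ S) (σ : Perm (Fin n)) :
    ∃ m, 0 < m ∧ (σ ^ m) s ∈ S :=
  ⟨orderOf σ, orderOf_pos σ, by simp [pow_orderOf_eq_one, hs]⟩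

noncomputable def ret (S : Finset (Fin n)) {s : Fin n} (hs : s ∈ S) (σ : Perm (Fin n)) : ℕ :=
  Nat.find (exists_ret S hs σ)

lemma ret_pos (S : Finset (Fin n)) {s : Fin n} (hs : s ∈ S) (σ : Perm (Fin n)) :
    0 < ret S hs σ := (Nat.find_spec (exists_ret S hs σ)).1

lemma ret_mem (S : Finset (Fin n)) {s : Fin n} (hs : s ∈ S) (σ : Perm (Fin n)) :
    (σ ^ ret S hs σ) s ∈ S := (Nat.find_spec (exists_ret S hs σ)).2

lemma ret_min (S : Finset (Fin n)) {s : Fin n} (hs : s ∈ S) (σ : Perm (Fin n))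
    {k : ℕ} (hk0 : 0 < k) (hk : k < ret S hs σ) : (σ ^ k) s ∉ S := by
  intro h
  exact Nat.find_min (exists_ret S hs σ) hk ⟨hk0, h⟩

noncomputable def F (S : Finset (Fin n)) {s : Fin n} (hs : s ∈ S) (σ : Perm (Fin n)) : Fin n :=
  (σ ^ ret S hs σ) s

lemma F_mem (S : Finset (Fin n)) {s : Fin n} (hs : s ∈ S) (σ : Perm (Fin n)) :
    F S hs σ ∈ S := ret_mem S hs σ

lemma swap_mem (S : Finset (Fin n)) {a b x : Fin n} (ha : a ∈ S) (hb : b ∈ S) (hx : x ∈ S) :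
    Equiv.swap a b x ∈ S := by
  rcases eq_or_ne x a with rfl | hxa
  · rwa [Equiv.swap_apply_left]
  rcases eq_or_ne x b with rfl | hxb
  · rwa [Equiv.swap_apply_right]
  · rwa [Equiv.swap_apply_of_ne_of_ne hxa hxb]

lemma traj (S : Finset (Fin n)) {s a b : Fin n} (hs : s ∈ S) (ha : a ∈ S) (hb : b ∈ S)
    (σ : Perm (Fin n)) : ∀ k, k ≤ ret S hs σ →
      ((Equiv.swap a b * σ) ^ k) s
        = if k < ret S hs σ then (σ ^ k) s else Equiv.swap a b ((σ ^ k) s) := by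
  intro k
  induction k with
  | zero => intro _; simp [ret_pos S hs σ]
  | succ k ih =>
    intro hk1
    have hk : k < ret S hs σ := lt_of_lt_of_le (Nat.lt_succ_self k) hk1
    have ihk := ih (le_of_lt hk)
    rw [if_pos hk] at ihk
    have step : ((Equiv.swap a b * σ) ^ (k + 1)) s = Equiv.swap a b ((σ ^ (k + 1)) s) := by
      rw [pow_succ', Perm.mul_apply, ihk, Perm.mul_apply, ← Perm.mul_apply σ, ← pow_succ']
    rcases lt_or_ge (k + 1) (ret S hs σ) with h | h
    · rw [if_pos h, step]
      have hnot := ret_min S hs σ (Nat.succ_pos k) h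
      have h1 : (σ ^ (k + 1)) s ≠ a := fun h' => hnot (h' ▸ ha)
      have h2 : (σ ^ (k + 1)) s ≠ b := fun h' => hnot (h' ▸ hb)
      rw [Equiv.swap_apply_of_ne_of_ne h1 h2]
    · rw [if_neg (not_lt.mpr h), step]

lemma ret_swap (S : Finset (Fin n)) {s a b : Fin n} (hs : s ∈ S) (ha : a ∈ S) (hb : b ∈ S)
    (σ : Perm (Fin n)) : ret S hs (Equiv.swap a b * σ) = ret S hs σ := by
  apply le_antisymm
  · apply Nat.find_le
    refine ⟨ret_pos S hs σ, ?_⟩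
    have := traj S hs ha hb σ (ret S hs σ) le_rfl
    rw [if_neg (lt_irrefl _)] at this
    rw [this]
    exact swap_mem S ha hb (ret_mem S hs σ)
  · have hle : ∀ k, k < ret S hs σ → ¬ (0 < k ∧ ((Equiv.swap a b * σ) ^ k) s ∈ S) := by
      rintro k hk ⟨hk0, hmem⟩
      have := traj S hs ha hb σ k (le_of_lt hk)
      rw [if_pos hk] at this
      rw [this] at hmem
      exact ret_min S hs σ hk0 hk hmem
    exact (Nat.le_find_iff _ _).mpr hle

lemma F_swap (S : Finset (Fin n)) {s a b : Fin n} (hs : s ∈ S) (ha : a ∈ S) (hb : b ∈ S)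
    (σ : Perm (Fin n)) : F S hs (Equiv.swap a b * σ) = Equiv.swap a b (F S hs σ) := by
  unfold F
  rw [ret_swap S hs ha hb σ]
  have := traj S hs ha hb σ (ret S hs σ) le_rfl
  rwa [if_neg (lt_irrefl _)] at this

lemma card_fiber_eq (S : Finset (Fin n)) {s t : Fin n} (hs : s ∈ S) (ht : t ∈ S) :
    Nat.card {σ : Perm (Fin n) | F S hs σ = s} = Nat.card {σ : Perm (Fin n) | F S hs σ = t} := by
  apply Nat.card_congr
  refine ⟨fun σ => ⟨Equiv.swap s t * σ.1, ?_⟩, fun σ => ⟨Equiv.swap s t * σ.1, ?_⟩, ?_, ?_⟩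
  · have := F_swap S hs hs ht σ.1
    have h2 := σ.2
    simp only [Set.mem_setOf_eq] at h2 ⊢
    rw [this, h2, Equiv.swap_apply_left]
  · have := F_swap S hs hs ht σ.1
    have h2 := σ.2
    simp only [Set.mem_setOf_eq] at h2 ⊢
    rw [this, h2, Equiv.swap_apply_right]
  · intro σ
    apply Subtype.ext
    simp [← mul_assoc]
  · intro σ
    apply Subtype.ext
    simp [← mul_assoc]

lemma pow_apply_mod (σ : Perm (Fin n)) {s : Fin n} {m : ℕ} (h : (σ ^ m) s = s) (k : ℕ) :
    (σ ^ k) s = (σ ^ (k % m)) s := by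
  have key : ∀ q : ℕ, ((σ ^ m) ^ q) s = s := by
    intro q
    induction q with
    | zero => simp
    | succ q ih => rw [pow_succ, Perm.mul_apply, h, ih]
  conv_lhs => rw [← Nat.mod_add_div k m]
  rw [pow_add, Perm.mul_apply, pow_mul, key]

lemma F_eq_iff (S : Finset (Fin n)) {s : Fin n} (hs : s ∈ S) (σ : Perm (Fin n)) :
    F S hs σ = s ↔ σ ∈ goodPerm S s := by
  constructor
  · intro h k hk
    have hmod := pow_apply_mod σ h k
    rcases Nat.eq_zero_or_pos (k % ret S hs σ) with h0 | h0
    · rw [hmod, h0, pow_zero]; rfl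
    · exfalso
      refine ret_min S hs σ h0 (Nat.mod_lt _ (ret_pos S hs σ)) ?_
      rwa [← hmod]
  · intro h
    exact h _ (ret_mem S hs σ)

lemma card_mul_goodPerm (S : Finset (Fin n)) {s : Fin n} (hs : s ∈ S) :
    S.card * Nat.card (goodPerm S s) = n.factorial := by
  classical
  have hcard : ∀ t : Fin n, Nat.card {σ : Perm (Fin n) | F S hs σ = t}
      = (Finset.univ.filter fun σ : Perm (Fin n) => F S hs σ = t).card := by
    intro t
    rw [Nat.card_eq_fintype_card]
    exact Fintype.card_subtype _
  have h1 : (Finset.univ : Finset (Perm (Fin n))).card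
      = ∑ t ∈ S, (Finset.univ.filter fun σ : Perm (Fin n) => F S hs σ = t).card :=
    Finset.card_eq_sum_card_fiberwise (fun σ _ => F_mem S hs σ)
  have h2 : ∀ t ∈ S, (Finset.univ.filter fun σ : Perm (Fin n) => F S hs σ = t).card
      = Nat.card (goodPerm S s) := by
    intro t ht
    rw [← hcard t, ← card_fiber_eq S hs ht]
    have hset : {σ : Perm (Fin n) | F S hs σ = s} = goodPerm S s :=
      Set.ext fun σ => F_eq_iff S hs σ
    rw [hset]
  rw [Finset.sum_congr rfl h2, Finset.sum_const, smul_eq_mul] at h1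
  rw [← h1, Finset.card_univ, Fintype.card_perm, Fintype.card_fin]

lemma card_goodPerm (S : Finset (Fin n)) {s : Fin n} (hs : s ∈ S) :
    Nat.card (goodPerm S s) = n.factorial / S.card := by
  have h := card_mul_goodPerm S hs
  have hpos : 0 < S.card := Finset.card_pos.mpr ⟨s, hs⟩
  exact (Nat.div_eq_of_eq_mul_left hpos (by rw [← h, mul_comm])).symm


/-! ### Cycles -/

def cycSet (σ : Perm (Fin n)) (i : Fin n) : Set (Fin n) := {j | ∃ k : ℕ, (σ ^ k) i = j}

lemma self_mem_cycSet (σ : Perm (Fin n)) (i : Fin n) : i ∈ cycSet σ i := ⟨0, rfl⟩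

lemma cycSet_eq_of_mem {σ : Perm (Fin n)} {w i : Fin n} (h : i ∈ cycSet σ w) :
    cycSet σ w = cycSet σ i := by
  obtain ⟨k0, hk0⟩ := h
  have hw : w ∈ cycSet σ i := by
    refine ⟨k0 * orderOf σ - k0, ?_⟩
    have hM : 0 < orderOf σ := orderOf_pos σ
    have hle : k0 ≤ k0 * orderOf σ := Nat.le_mul_of_pos_right k0 hM
    rw [← hk0, ← Perm.mul_apply, ← pow_add, Nat.sub_add_cancel hle, mul_comm k0 (orderOf σ),
      pow_mul, pow_orderOf_eq_one, one_pow, Perm.one_apply]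
  apply Set.Subset.antisymm
  · rintro j ⟨k, rfl⟩
    obtain ⟨d, hd⟩ := hw
    exact ⟨k + d, by rw [pow_add, Perm.mul_apply, hd]⟩
  · rintro j ⟨k, rfl⟩
    exact ⟨k + k0, by rw [pow_add, Perm.mul_apply, hk0]⟩

/-- Cycles through `i` avoiding `S \ {i}`. -/
def markedSet (S : Finset (Fin n)) (i : Fin n) : Set (Set (Fin n) × Perm (Fin n)) :=
  {p | p ∈ permCycles n ∧ i ∈ p.1 ∧ ∀ j ∈ S, j ∈ p.1 → j = i}

lemma bij (S : Finset (Fin n)) {i : Fin n} (hi : i ∈ S) :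
    Set.BijOn (fun σ : Perm (Fin n) => ((cycSet σ i, σ) : Set (Fin n) × Perm (Fin n)))
      (goodPerm S i) (markedSet S i) := by
  refine ⟨?_, ?_, ?_⟩
  · intro σ hσ
    refine ⟨⟨i, rfl⟩, self_mem_cycSet σ i, ?_⟩
    rintro j hjS ⟨k, rfl⟩
    exact hσ k hjS
  · intro σ _ σ' _ h
    exact congrArg Prod.snd h
  · rintro p ⟨⟨w, hw⟩, hip, hall⟩
    have hw' : p.1 = cycSet p.2 w := hw
    have hcyc : cycSet p.2 w = cycSet p.2 i := cycSet_eq_of_mem (hw' ▸ hip)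
    refine ⟨p.2, ?_, ?_⟩
    · intro k hkS
      exact hall _ hkS (by rw [hw', hcyc]; exact ⟨k, rfl⟩)
    · have h1 : cycSet p.2 i = p.1 := by rw [hw', hcyc]
      exact Prod.ext_iff.mpr ⟨h1, rfl⟩

lemma markedSet_finite (S : Finset (Fin n)) {i : Fin n} (hi : i ∈ S) :
    (markedSet S i).Finite := by
  rw [← (bij S hi).image_eq]
  exact (Set.toFinite _).image _

lemma card_markedSet (S : Finset (Fin n)) {i : Fin n} (hi : i ∈ S) :
    Nat.card (markedSet S i) = n.factorial / S.card := by
  rw [Nat.card_coe_set_eq, ← (bij S hi).image_eq,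
    Set.ncard_image_of_injOn (bij S hi).injOn, ← Nat.card_coe_set_eq, card_goodPerm S hi]

lemma setEq1 (I : Finset (Fin n)) {i : Fin n} (hi : i ∈ I) :
    (permCyclesThrough n i \ ⋃ j ∈ I.erase i, permCyclesThrough n j) = markedSet I i := by
  ext p
  simp only [Set.mem_diff, Set.mem_iUnion, markedSet, permCyclesThrough, Set.mem_setOf_eq,
    not_exists, Finset.mem_erase, exists_prop]
  constructor
  · rintro ⟨⟨hY, hip⟩, hnot⟩
    refine ⟨hY, hip, fun j hjI hjp => ?_⟩
    by_contra hne
    exact hnot j ⟨⟨hne, hjI⟩, hY, hjp⟩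
  · rintro ⟨hY, hip, hall⟩
    refine ⟨⟨hY, hip⟩, ?_⟩
    rintro j ⟨⟨hne, hjI⟩, _, hjp⟩
    exact hne (hall j hjI hjp)

lemma setEq2 : permCycles n = ⋃ i ∈ (Finset.univ : Finset (Fin n)), markedSet (Finset.Iic i) i := by
  apply Set.Subset.antisymm
  · rintro p ⟨w, hw⟩
    have hwp : w ∈ p.1 := by rw [hw]; exact ⟨0, rfl⟩
    obtain ⟨i, hip, hmin⟩ := Set.exists_min_image p.1 id (Set.toFinite _) ⟨w, hwp⟩
    refine Set.mem_biUnion (Finset.mem_univ i) ?_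
    exact ⟨⟨w, hw⟩, hip, fun j hjI hjp => le_antisymm (Finset.mem_Iic.mp hjI) (hmin j hjp)⟩
  · refine Set.iUnion₂_subset fun i _ => fun p hp => hp.1

lemma markedSet_disjoint {i i' : Fin n} (h : i ≠ i') :
    Disjoint (markedSet (Finset.Iic i) i) (markedSet (Finset.Iic i') i') := by
  rw [Set.disjoint_left]
  rintro p ⟨_, hip, hall⟩ ⟨_, hip', hall'⟩
  rcases le_total i i' with hle | hle
  · exact h (hall' i (Finset.mem_Iic.mpr hle) hip)
  · exact h ((hall i' (Finset.mem_Iic.mpr hle) hip').symm)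

lemma ncard_biUnion {α β : Type*} (s : Finset β) (f : β → Set α)
    (hfin : ∀ b ∈ s, (f b).Finite)
    (hdisj : ∀ b ∈ s, ∀ c ∈ s, b ≠ c → Disjoint (f b) (f c)) :
    (⋃ b ∈ s, f b).ncard = ∑ b ∈ s, (f b).ncard := by
  classical
  induction s using Finset.cons_induction with
  | empty => simp
  | cons a s ha ih =>
    rw [Finset.sum_cons, Finset.cons_eq_insert, Finset.set_biUnion_insert]
    have hfa : (f a).Finite := hfin a (Finset.mem_cons_self a s)
    have hfin' : ∀ b ∈ s, (f b).Finite := fun b hb => hfin b (Finset.mem_cons.mpr (Or.inr hb))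
    have hU : (⋃ b ∈ s, f b).Finite := Set.Finite.biUnion s.finite_toSet hfin'
    have hd : Disjoint (f a) (⋃ b ∈ s, f b) := by
      rw [Set.disjoint_iUnion_right]
      intro b
      rw [Set.disjoint_iUnion_right]
      intro hb
      exact hdisj a (Finset.mem_cons_self a s) b (Finset.mem_cons.mpr (Or.inr hb))
        (fun hab => ha (hab ▸ hb))
    rw [Set.ncard_union_eq hd hfa hU,
      ih hfin' (fun b hb c hc => hdisj b (Finset.mem_cons.mpr (Or.inr hb)) c
        (Finset.mem_cons.mpr (Or.inr hc)))]

lemma card_permCycles : Nat.card (permCycles n) = ∑ i ∈ Finset.Icc 1 n, n.factorial / i := by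
  rw [Nat.card_coe_set_eq, setEq2,
    ncard_biUnion _ _ (fun i _ => markedSet_finite _ (Finset.mem_Iic.mpr le_rfl))
      (fun i _ i' _ h => markedSet_disjoint h)]
  have h1 : ∀ i : Fin n, (markedSet (Finset.Iic i) i).ncard = n.factorial / ((i : ℕ) + 1) := by
    intro i
    rw [← Nat.card_coe_set_eq, card_markedSet _ (Finset.mem_Iic.mpr le_rfl), Fin.card_Iic]
  rw [Finset.sum_congr rfl (fun i _ => h1 i),
    Fin.sum_univ_eq_sum_range (fun k => n.factorial / (k + 1)) n,
    ← Finset.Ico_add_one_right_eq_Icc, Finset.sum_Ico_eq_sum_range]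
  simp [Nat.add_comm]

lemma sum_le_real (hn : 1 ≤ n) :
    ((∑ i ∈ Finset.Icc 1 n, n.factorial / i : ℕ) : ℝ) ≤ (1 + Real.log n) * n.factorial := by
  have hcast : ∀ i ∈ Finset.Icc 1 n, ((n.factorial / i : ℕ) : ℝ) = (n.factorial : ℝ) * (i : ℝ)⁻¹ := by
    intro i hi
    rw [Finset.mem_Icc] at hi
    have hdvd : i ∣ n.factorial := Nat.dvd_factorial (by omega) hi.2
    have hi0 : (i : ℝ) ≠ 0 := Nat.cast_ne_zero.mpr (by omega)
    rw [Nat.cast_div hdvd hi0, div_eq_mul_inv]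
  rw [Nat.cast_sum, Finset.sum_congr rfl hcast, ← Finset.mul_sum]
  have hh : ∑ i ∈ Finset.Icc 1 n, ((i : ℝ))⁻¹ = ((harmonic n : ℚ) : ℝ) := by
    rw [harmonic_eq_sum_Icc]
    push_cast
    rfl
  rw [hh, mul_comm]
  exact mul_le_mul_of_nonneg_right (harmonic_le_one_add_log n) (by positivity)

end PermCyclesOverlapAux

open PermCyclesOverlapAux

/-- Overlap lemma: with `Y` the set of cycles of permutations of `{1,…,n}` and
`X_i ⊆ Y` the cycles through `i`, one has `|Y| = Σ_{i=1}^n n!/i ≤ (1 + log n)·n!`,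
and for every `I ⊆ {1,…,n}` and `i ∈ I`,
`|X_i \ ⋃_{j ∈ I∖{i}} X_j| = n!/|I| ≥ |Y|/((1 + log n)·|I|)`. -/
theorem permCycles_overlap (n : ℕ) (hn : 1 ≤ n) :
    Nat.card (permCycles n) = ∑ i ∈ Finset.Icc 1 n, n.factorial / i ∧
    (Nat.card (permCycles n) : ℝ) ≤ (1 + Real.log n) * n.factorial ∧
    ∀ I : Finset (Fin n), ∀ i ∈ I,
      Nat.card ((permCyclesThrough n i) \ ⋃ j ∈ I.erase i, permCyclesThrough n j : Set _)
          = n.factorial / I.card ∧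
      (Nat.card (permCycles n) : ℝ) / ((1 + Real.log n) * I.card) ≤
        (Nat.card ((permCyclesThrough n i) \ ⋃ j ∈ I.erase i, permCyclesThrough n j : Set _) : ℝ) := by
  have hY := card_permCycles (n := n)
  have hYle : (Nat.card (permCycles n) : ℝ) ≤ (1 + Real.log n) * n.factorial := by
    rw [hY]; exact sum_le_real hn
  refine ⟨hY, hYle, ?_⟩
  intro I i hi
  have hcard : Nat.card ((permCyclesThrough n i) \ ⋃ j ∈ I.erase i, permCyclesThrough n j : Set _)
      = n.factorial / I.card := by
    rw [setEq1 I hi, card_markedSet I hi]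
  refine ⟨hcard, ?_⟩
  rw [hcard]
  have hdvd : I.card ∣ n.factorial := ⟨Nat.card (goodPerm I i), (card_mul_goodPerm I hi).symm⟩
  have hIpos : (0 : ℝ) < I.card := by
    have := Finset.card_pos.mpr ⟨i, hi⟩
    exact_mod_cast this
  have hlog : (0 : ℝ) < 1 + Real.log n := by
    have : (0 : ℝ) ≤ Real.log n := Real.log_nonneg (by exact_mod_cast hn)
    linarith
  rw [Nat.cast_div hdvd (ne_of_gt hIpos)]
  calc (Nat.card (permCycles n) : ℝ) / ((1 + Real.log n) * I.card)
      ≤ ((1 + Real.log n) * n.factorial) / ((1 + Real.log n) * I.card) := by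
        exact (div_le_div_iff_of_pos_right (mul_pos hlog hIpos)).mpr hYle
    _ = (n.factorial : ℝ) / I.card := by
        rw [mul_div_mul_left _ _ (ne_of_gt hlog)]
end
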